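/- arXiv:math/0008143 — 5 statements merged into one kernel-verified Lean document; each statement's English description precedes it below -/
import Mathlib

section
/- Let d and a_1, ..., a_s be positive real numbers, and let r_1, ..., r_s be real numbers with 0 ≤ r_i ≤ 2d for each i. Suppose there is a signed permutation σ (a permutation of indices composed with sign changes) mapping the tuple (a_1 + d, ..., a_s + d) to the tuple (a_1 + d − r_1, ..., a_s + d − r_s). Then σ involves no sign changes (it is an ordinary permutation of coordinates) and r_1 = r_2 = ... = r_s = 0. -/
/-- A signed permutation mapping `(a i + d)` to `(a i + d - r i)` (i.e. the image vector
`i ↦ ε i * (a (π i) + d)` equals `i ↦ a i + d - r i`) must be an ordinary permutation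
and all `r i` vanish. -/
theorem stmt0 (s : ℕ) (d : ℝ) (a r : Fin s → ℝ)
    (hd : 0 < d) (ha : ∀ i, 0 < a i)
    (hr : ∀ i, 0 ≤ r i ∧ r i ≤ 2 * d)
    (π : Equiv.Perm (Fin s)) (ε : Fin s → ℝ) (hε : ∀ i, ε i = 1 ∨ ε i = -1)
    (hmap : ∀ i, ε i * (a (π i) + d) = a i + d - r i) :
    (∀ i, ε i = 1) ∧ (∀ i, r i = 0) := by
  have hε1 : ∀ i, ε i = 1 := by
    intro i
    rcases hε i with h | h
    · exact h
    · exfalso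
      have := hmap i
      rw [h] at this
      have h1 := ha i
      have h2 := ha (π i)
      have h3 := (hr i).2
      linarith
  have key : ∀ i, a (π i) = a i - r i := by
    intro i
    have := hmap i
    rw [hε1 i] at this
    linarith
  have hsum : ∑ i, a (π i) = ∑ i, a i := Equiv.sum_comp π a
  have hsum2 : ∑ i, r i = 0 := by
    have : ∑ i, a (π i) = ∑ i, a i - ∑ i, r i := by
      rw [← Finset.sum_sub_distrib]
      exact Finset.sum_congr rfl fun i _ => key i
    linarith
  refine ⟨hε1, fun i => ?_⟩
  have := Finset.sum_eq_zero_iff_of_nonneg (fun j _ => (hr j).1) |>.mp hsum2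
  exact this i (Finset.mem_univ i)
end

section
/- Let A be a polynomial algebra (over a field of characteristic zero) equipped with an action of a finite group W by algebra automorphisms. Suppose p, p' ∈ A with p ≠ 0 are such that the fraction p'/p is W-invariant (i.e. s(p')·p = s(p)·p' for all s ∈ W). Let q be a maximal W-invariant divisor of p^{|W|} (a W-invariant divisor of p^{|W|} of maximal degree). Then there exists q' ∈ A^W such that p'/p = q'/q, i.e. p'·q = p·q'. -/
/-!
Put `q' := p' q / p`; once `p ∣ p' q`, the invariance of `q'` follows from that of `p'/p` and `q`.
If `p ∤ p' q`, some prime `π` has `v_π(p) > v_π(p') + v_π(q)`. The invariance of `p'/p` transports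
this along the orbit: `v_{sπ}(p) > v_π(q) = v_{sπ}(q)` for every `s ∈ W`. Hence for a prime `ρ`
associated to some `sπ`, `v_ρ(q · ∏_{s ∈ W} sπ) ≤ v_π(q) + |W| ≤ |W| · v_ρ(p)`, so `q · ∏_{s ∈ W} sπ`
still divides `p^{|W|}`; it is `W`-invariant and of larger degree than `q`, contradicting the
maximality of `q`.
-/

section GroupAction

variable {R W : Type*} [CommMonoidWithZero R] [Group W] [MulDistribMulAction W R]

theorem Prime.smul {π : R} (hπ : Prime π) (s : W) : Prime (s • π) :=
  (MulEquiv.prime_iff (MulDistribMulAction.toMulEquiv R s)).2 hπ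

theorem emultiplicity_smul_smul (s : W) (a b : R) :
    emultiplicity (s • a) (s • b) = emultiplicity a b :=
  emultiplicity_map_eq (MulDistribMulAction.toMulEquiv R s)

theorem smul_ne_zero_of_ne_zero {a : R} (ha : a ≠ 0) (s : W) : s • a ≠ 0 :=
  (map_ne_zero_iff _ (MulDistribMulAction.toMulEquiv R s).injective).2 ha

theorem smul_prod_smul [Fintype W] (t : W) (a : R) :
    t • ∏ s : W, s • a = ∏ s : W, s • a := by
  rw [Finset.smul_prod']
  simp_rw [smul_smul]
  exact Fintype.prod_equiv (Equiv.mulLeft t) _ _ fun _ => rfl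

variable [IsCancelMulZero R]

theorem smul_eq_of_mul_eq_mul {p p' q q' : R} (hp : p ≠ 0)
    (hinv : ∀ s : W, s • p' * p = s • p * p') (hq : ∀ s : W, s • q = q)
    (h : p' * q = p * q') (s : W) : s • q' = q' := by
  have hs : s • p' * q = s • p * s • q' := by
    simpa only [smul_mul', hq s] using congrArg (s • ·) h
  refine mul_left_cancel₀ (mul_ne_zero (smul_ne_zero_of_ne_zero hp s) hp) ?_
  calc s • p * p * s • q' = s • p' * p * q := by rw [mul_right_comm, ← hs, mul_right_comm]
    _ = s • p * p * q' := by rw [hinv s, mul_assoc, h, mul_assoc]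

theorem lt_emultiplicity_smul_of_add_lt {p p' π : R} (hinv : ∀ s : W, s • p' * p = s • p * p')
    (hπ : Prime π) {m : ℕ∞} (h : emultiplicity π p' + m < emultiplicity π p) (s : W) :
    m < emultiplicity (s • π) p := by
  have hval : emultiplicity π p' + emultiplicity (s • π) p =
      emultiplicity π p + emultiplicity (s • π) p' := by
    simpa only [emultiplicity_mul (hπ.smul s), emultiplicity_smul_smul] using
      congrArg (emultiplicity (s • π)) (hinv s)
  by_contra! hle
  refine (lt_of_lt_of_le ?_ le_self_add).ne hval
  calc emultiplicity π p' + emultiplicity (s • π) p ≤ emultiplicity π p' + m := by gcongr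
    _ < emultiplicity π p := h

end GroupAction

section UniqueFactorization

variable {R W : Type*} [CommMonoidWithZero R] [UniqueFactorizationMonoid R]
  [Group W] [Fintype W] [MulDistribMulAction W R]

theorem mul_prod_smul_dvd_pow_card {p q π : R} (hqdvd : q ∣ p ^ Fintype.card W)
    (hq : ∀ s : W, s • q = q) (hπ : Prime π)
    (h : ∀ s : W, emultiplicity π q < emultiplicity (s • π) p) :
    q * ∏ s : W, s • π ∣ p ^ Fintype.card W := by
  nontriviality R
  have hq0 : q ≠ 0 := by
    rintro rfl
    simpa using h 1
  have horbit0 : ∏ s : W, s • π ≠ 0 := Finset.prod_ne_zero_iff.2 fun s _ => (hπ.smul s).ne_zero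
  refine (UniqueFactorizationMonoid.dvd_iff_emultiplicity_le (mul_ne_zero hq0 horbit0)).2 fun ρ hρ => ?_
  rw [emultiplicity_pow hρ, emultiplicity_mul hρ, Finset.emultiplicity_prod hρ]
  by_cases hρπ : ∃ s₀ : W, ρ ∣ s₀ • π
  · obtain ⟨s₀, hs₀⟩ := hρπ
    have hassoc := hρ.associated_of_dvd (hπ.smul s₀) hs₀
    have hqρ : emultiplicity ρ q = emultiplicity π q := by
      rw [← emultiplicity_eq_of_associated_left hassoc, ← emultiplicity_smul_smul s₀ π q, hq]
    have hpρ : emultiplicity π q + 1 ≤ emultiplicity ρ p := by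
      rw [← emultiplicity_eq_of_associated_left hassoc]
      exact Order.add_one_le_of_lt (h s₀)
    have horbit : ∑ s : W, emultiplicity ρ (s • π) ≤ Fintype.card W := by
      refine (Finset.sum_le_card_nsmul _ _ 1 fun s _ => ?_).trans (by simp)
      exact ((squarefree_iff_emultiplicity_le_one _).1 (hπ.smul s).squarefree ρ).resolve_right
        hρ.not_isUnit
    have hcard : (1 : ℕ∞) ≤ Fintype.card W := by exact_mod_cast Fintype.card_pos
    calc emultiplicity ρ q + ∑ s : W, emultiplicity ρ (s • π)
        ≤ emultiplicity π q + Fintype.card W := by rw [hqρ]; gcongr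
      _ ≤ Fintype.card W * (emultiplicity π q + 1) := by
        rw [mul_add, mul_one]
        gcongr
        exact le_mul_of_one_le_left' hcard
      _ ≤ Fintype.card W * emultiplicity ρ p := by gcongr
  · simp only [not_exists] at hρπ
    simp only [emultiplicity_eq_zero.2 (hρπ _), Finset.sum_const_zero, add_zero]
    simpa only [emultiplicity_pow hρ] using emultiplicity_le_emultiplicity_of_dvd_right hqdvd (a := ρ)

theorem exists_prime_mul_prod_smul_dvd_pow_card {p p' q : R} (hp : p ≠ 0)
    (hinv : ∀ s : W, s • p' * p = s • p * p') (hqdvd : q ∣ p ^ Fintype.card W)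
    (hq : ∀ s : W, s • q = q) (hndvd : ¬p ∣ p' * q) :
    ∃ π : R, Prime π ∧ q * ∏ s : W, s • π ∣ p ^ Fintype.card W := by
  obtain ⟨π, hπ, hlt⟩ : ∃ π : R, Prime π ∧ emultiplicity π (p' * q) < emultiplicity π p := by
    simpa [UniqueFactorizationMonoid.dvd_iff_emultiplicity_le hp] using hndvd
  rw [emultiplicity_mul hπ] at hlt
  exact ⟨π, hπ, mul_prod_smul_dvd_pow_card hqdvd hq hπ (lt_emultiplicity_smul_of_add_lt hinv hπ hlt)⟩

end UniqueFactorization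

theorem MvPolynomial.totalDegree_pos_of_not_isUnit {σ k : Type*} [Field k]
    {f : MvPolynomial σ k} (hf0 : f ≠ 0) (hf : ¬IsUnit f) : 0 < f.totalDegree := by
  refine Nat.pos_of_ne_zero fun h0 => hf <|
    isUnit_iff_totalDegree_of_isReduced.2 ⟨IsUnit.mk0 _ fun hc => hf0 ?_, h0⟩
  rw [totalDegree_eq_zero_iff_eq_C.1 h0, hc, map_zero]

theorem stmt1_general {σ k : Type} [Field k]
    {W : Type} [Group W] [Fintype W]
    [MulSemiringAction W (MvPolynomial σ k)]
    (p p' q : MvPolynomial σ k) (hp : p ≠ 0)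
    (hinv : ∀ s : W, s • p' * p = s • p * p')
    (hqdvd : q ∣ p ^ Fintype.card W)
    (hqinv : ∀ s : W, s • q = q)
    (hqmax : ∀ q₂ : MvPolynomial σ k, q₂ ∣ p ^ Fintype.card W →
      (∀ s : W, s • q₂ = q₂) → q₂.totalDegree ≤ q.totalDegree) :
    ∃ q' : MvPolynomial σ k, (∀ s : W, s • q' = q') ∧ p' * q = p * q' := by
  obtain ⟨q', hq'⟩ : p ∣ p' * q := by
    by_contra hndvd
    obtain ⟨π, hπ, hdvd⟩ := exists_prime_mul_prod_smul_dvd_pow_card hp hinv hqdvd hqinv hndvd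
    obtain ⟨hq0, horbit0⟩ := mul_ne_zero_iff.1 (ne_zero_of_dvd_ne_zero (pow_ne_zero _ hp) hdvd)
    have hπdvd : π ∣ ∏ s : W, s • π := by
      simpa using Finset.dvd_prod_of_mem (fun s : W => s • π) (Finset.mem_univ 1)
    have horbit_pos := MvPolynomial.totalDegree_pos_of_not_isUnit horbit0
      fun hu => hπ.not_isUnit (isUnit_of_dvd_unit hπdvd hu)
    have hmax := hqmax _ hdvd fun t => by rw [smul_mul', hqinv, smul_prod_smul]
    rw [MvPolynomial.totalDegree_mul_of_isDomain hq0 horbit0] at hmax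
    omega
  exact ⟨q', smul_eq_of_mul_eq_mul hp hinv hqinv hq', hq'⟩

/-- Let `A` be a polynomial algebra over a field of characteristic zero with an action of a
finite group `W` by algebra automorphisms.  If `p'/p` is `W`-invariant and `q` is a maximal
`W`-invariant divisor of `p ^ |W|`, then `p'/p = q'/q` for some `W`-invariant `q'`. -/
theorem stmt1 {σ k : Type} [Field k] [CharZero k]
    {W : Type} [Group W] [Fintype W]
    [MulSemiringAction W (MvPolynomial σ k)]
    (hC : ∀ (s : W) (c : k), s • (MvPolynomial.C c : MvPolynomial σ k) = MvPolynomial.C c)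
    (p p' q : MvPolynomial σ k) (hp : p ≠ 0)
    (hinv : ∀ s : W, s • p' * p = s • p * p')
    (hqdvd : q ∣ p ^ Fintype.card W)
    (hqinv : ∀ s : W, s • q = q)
    (hqmax : ∀ q₂ : MvPolynomial σ k, q₂ ∣ p ^ Fintype.card W →
      (∀ s : W, s • q₂ = q₂) → q₂.totalDegree ≤ q.totalDegree) :
    ∃ q' : MvPolynomial σ k, (∀ s : W, s • q' = q') ∧ p' * q = p * q' :=
  stmt1_general p p' q hp hinv hqdvd hqinv hqmax
end

section
/- Let A be an algebra over a field k, and consider the full subcategory Fin of A-modules in which every element generates a finite-dimensional submodule (locally finite modules). Let (E_i)_{i∈I} be a family of A-modules in Fin, each of which is injective relative to Fin (i.e. for every monomorphism ι : X → Y in Fin and homomorphism X → E_i there is an extension Y → E_i). Then the direct sum ⊕_{i∈I} E_i is injective relative to Fin. -/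
/-!
Every element of a locally finite module lies in a finite-dimensional submodule `N`. A map from a
submodule `W ≤ N` into `⨁ i, E i` meets only finitely many summands, because `W` is finitely
generated, so it extends to `N` summand by summand using the relative injectivity of the `E i`.
Zorn's lemma, in the form of the maximal extension `Module.Baer.extensionOfMax`, glues these local
extensions into a global one.
-/

open scoped DirectSum

/-- A module is locally finite if every element generates a finite-dimensional
(over the base field) submodule. -/
def LocFinMod (k A : Type) [Field k] [Ring A] [Algebra k A]
    (X : Type) [AddCommGroup X] [Module k X] [Module A X] [IsScalarTower k A X] : Prop :=
  ∀ v : X, ∃ S : Submodule A X, v ∈ S ∧ FiniteDimensional k (S.restrictScalars k)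

/-- `E` is injective relative to the category `Fin` of locally finite modules. -/
def RelInjectiveFin (k A : Type) [Field k] [Ring A] [Algebra k A]
    (E : Type) [AddCommGroup E] [Module A E] : Prop :=
  ∀ (X Y : Type) [AddCommGroup X] [Module k X] [Module A X] [IsScalarTower k A X]
    [AddCommGroup Y] [Module k Y] [Module A Y] [IsScalarTower k A Y],
    LocFinMod k A X → LocFinMod k A Y →
    ∀ ι : X →ₗ[A] Y, Function.Injective ι →
    ∀ φ : X →ₗ[A] E, ∃ ψ : Y →ₗ[A] E, ψ.comp ι = φ

namespace DirectSum

variable {R I W N : Type*} [Semiring R] {E : I → Type*} [∀ i, AddCommMonoid (E i)]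
  [∀ i, Module R (E i)] [AddCommMonoid W] [Module R W] [AddCommMonoid N] [Module R N]

theorem sum_of_apply_of_support_subset [DecidableEq I] [∀ i (x : E i), Decidable (x ≠ 0)]
    {x : ⨁ i, E i} {F : Finset I} (hx : x.support ⊆ F) : ∑ i ∈ F, of E i (x i) = x :=
  (DFinsupp.sum_of_support_subset hx fun _ _ => DFinsupp.single_zero _).symm.trans
    DFinsupp.sum_single

theorem exists_finset_support_subset [DecidableEq I] [∀ i (x : E i), Decidable (x ≠ 0)]
    [Module.Finite R W] (f : W →ₗ[R] ⨁ i, E i) : ∃ F : Finset I, ∀ w, (f w).support ⊆ F := by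
  obtain ⟨s, hs⟩ := Module.Finite.fg_top (R := R) (M := W)
  set F := s.biUnion fun w => (f w).support
  let P : Submodule R W := ⨅ (i) (_ : i ∉ F), LinearMap.ker (component R I E i ∘ₗ f)
  have mem_P (v : W) : v ∈ P ↔ (f v).support ⊆ F := by
    rw [← Finset.coe_subset, DFinsupp.support_subset_iff]
    simp [P, ← apply_eq_component]
  have hsP : (s : Set W) ⊆ P := fun v hv =>
    (mem_P v).2 (Finset.subset_biUnion_of_mem (fun w => (f w).support) hv)
  exact ⟨F, fun w => (mem_P w).1 ((hs ▸ Submodule.span_le.2 hsP) Submodule.mem_top)⟩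

theorem exists_comp_eq_of_module_finite [Module.Finite R W] (j : W →ₗ[R] N)
    (hE : ∀ i (g : W →ₗ[R] E i), ∃ h : N →ₗ[R] E i, h ∘ₗ j = g) (f : W →ₗ[R] ⨁ i, E i) :
    ∃ h : N →ₗ[R] ⨁ i, E i, h ∘ₗ j = f := by
  classical
  obtain ⟨F, hF⟩ := exists_finset_support_subset f
  choose h hh using fun i => hE i (component R I E i ∘ₗ f)
  refine ⟨∑ i ∈ F, lof R I E i ∘ₗ h i, LinearMap.ext fun w => ?_⟩
  simp [← LinearMap.comp_apply (h _) j, hh, lof_eq_of, ← apply_eq_component,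
    sum_of_apply_of_support_subset (hF w)]

end DirectSum

namespace Module.Baer

variable {R Q M N : Type*} [Ring R] [AddCommGroup Q] [Module R Q] [AddCommGroup M] [Module R M]
  [AddCommGroup N] [Module R N] {i : M →ₗ[R] N}

section

variable {f : M →ₗ[R] Q} [Fact (Function.Injective i)]

theorem le_domain_extensionOfMax {P : Submodule R N} (g : P →ₗ[R] Q)
    (hg : ∀ x (hxD : x ∈ (extensionOfMax i f).domain) (hxP : x ∈ P),
      g ⟨x, hxP⟩ = (extensionOfMax i f).toLinearPMap ⟨x, hxD⟩) :
    P ≤ (extensionOfMax i f).domain := by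
  set D := extensionOfMax i f
  have compat : ∀ (x : D.domain) (y : P), (x : N) = y → D.toLinearPMap x = g y := by
    rintro ⟨x, hxD⟩ ⟨y, hyP⟩ (rfl : x = y)
    exact (hg x hxD hyP).symm
  let D' : ExtensionOf i f :=
    { D.toLinearPMap.sup ⟨P, g⟩ compat with
      le := D.le.trans le_sup_left
      is_extension := fun m =>
        (D.is_extension m).trans ((D.toLinearPMap.left_le_sup _ compat).2 rfl) }
  have hD' : D' = D := extensionOfMax_is_max i f D' (D.toLinearPMap.left_le_sup _ compat)
  exact hD' ▸ le_sup_right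

theorem exists_comp_eq_of_domain_extensionOfMax_eq_top (h : (extensionOfMax i f).domain = ⊤) :
    ∃ g : N →ₗ[R] Q, g ∘ₗ i = f :=
  ⟨(extensionOfMax i f).toLinearPMap.toFun ∘ₗ (LinearEquiv.ofTop _ h).symm.toLinearMap,
    LinearMap.ext fun m => ((extensionOfMax i f).is_extension m).symm⟩

end

theorem exists_comp_eq_of_forall_mem_extendable (hi : Function.Injective i) (f : M →ₗ[R] Q)
    (h : ∀ y : N, ∃ P : Submodule R N, y ∈ P ∧
      ∀ (W : Submodule R N) (hWP : W ≤ P) (g : W →ₗ[R] Q), ∃ g' : P →ₗ[R] Q,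
        g' ∘ₗ Submodule.inclusion hWP = g) :
    ∃ g : N →ₗ[R] Q, g ∘ₗ i = f := by
  have : Fact (Function.Injective i) := ⟨hi⟩
  set D := extensionOfMax i f
  refine exists_comp_eq_of_domain_extensionOfMax_eq_top (Submodule.eq_top_iff'.2 fun y => ?_)
  obtain ⟨P, hyP, hP⟩ := h y
  obtain ⟨g, hg⟩ := hP (D.domain ⊓ P) inf_le_right
    (D.toLinearPMap.toFun ∘ₗ Submodule.inclusion inf_le_left)
  exact le_domain_extensionOfMax g (fun x hxD hxP => LinearMap.congr_fun hg ⟨x, hxD, hxP⟩) hyP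

end Module.Baer

theorem LocFinMod.of_finiteDimensional {k A : Type} [Field k] [Ring A] [Algebra k A]
    {X : Type} [AddCommGroup X] [Module k X] [Module A X] [IsScalarTower k A X]
    [FiniteDimensional k X] : LocFinMod k A X :=
  fun _ => ⟨⊤, trivial, by rw [Submodule.restrictScalars_top]; infer_instance⟩

theorem stmt6_general {k A : Type} [Field k] [Ring A] [Algebra k A]
    {I : Type} (E : I → Type) [∀ i, AddCommGroup (E i)]
    [∀ i, Module A (E i)]
    (hinj : ∀ i, RelInjectiveFin k A (E i)) :
    RelInjectiveFin k A (⨁ i, E i) := by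
  intro X Y _ _ _ _ _ _ _ _ _ hY ι hι φ
  refine Module.Baer.exists_comp_eq_of_forall_mem_extendable hι φ fun y => ?_
  obtain ⟨N, hyN, hN⟩ := hY y
  refine ⟨N, hyN, fun W hWN g => ?_⟩
  have : FiniteDimensional k N := hN
  have : FiniteDimensional k W :=
    Submodule.finiteDimensional_of_le (show W.restrictScalars k ≤ N.restrictScalars k from hWN)
  have : Module.Finite A W := Module.Finite.of_restrictScalars_finite k A W
  exact DirectSum.exists_comp_eq_of_module_finite _ (fun i => hinj i W N .of_finiteDimensional
    .of_finiteDimensional _ (Submodule.inclusion_injective hWN)) g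

/-- A direct sum of modules each injective relative to the category of locally finite
modules is again injective relative to that category. -/
theorem stmt6 {k A : Type} [Field k] [Ring A] [Algebra k A]
    {I : Type} (E : I → Type) [∀ i, AddCommGroup (E i)] [∀ i, Module k (E i)]
    [∀ i, Module A (E i)] [∀ i, IsScalarTower k A (E i)]
    (hlf : ∀ i, LocFinMod k A (E i))
    (hinj : ∀ i, RelInjectiveFin k A (E i)) :
    RelInjectiveFin k A (⨁ i, E i) :=
  stmt6_general E hinj
end

section
/- Let A be a commutative integral domain with fraction field K. Let L be a finite-dimensional K-vector space with basis v_1, ..., v_r, and let N be an A-submodule of Hom(L, A) := {A-valued functionals} whose rank (dimension of N ⊗_A K over K) is k. Suppose θ_1, ..., θ_k ∈ N are such that the r × k matrix (θ_j(v_i)) over A has a nonzero k × k minor p. Then the localized module N ⊗_A A[p^{-1}] is a free A[p^{-1}]-module, and the images of θ_1, ..., θ_k form a basis: for every θ ∈ N there exist unique p_1, ..., p_k ∈ A with p·θ = Σ_{j=1}^k p_j θ_j. -/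
/-!
Restricting to the coordinates `e` turns `∑ cⱼ θⱼ` into `M c`, where `M` is the minor with
`det M = p ≠ 0`; so the `θⱼ` are linearly independent, and by the rank bound every `θ ∈ N` satisfies
a relation `a θ = ∑ dⱼ θⱼ` with `a ≠ 0`. Cramer's rule `adj M · M = p` then shows that
`p θ = ∑ (adj M · θ∘e)ⱼ θⱼ` after cancelling `a`, and uniqueness is linear independence.
-/

open Matrix

theorem exists_smul_eq_sum_of_not_linearIndependent_cons {R M : Type*} [Ring R]
    [AddCommGroup M] [Module R M] {k : ℕ} {v : Fin k → M} (hv : LinearIndependent R v) {x : M}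
    (h : ¬LinearIndependent R (Fin.cons x v : Fin (k + 1) → M)) :
    ∃ a : R, a ≠ 0 ∧ ∃ d : Fin k → R, a • x = ∑ j, d j • v j := by
  by_contra! H
  refine h (hv.finCons' x v fun a y hy hxy => by_contra fun ha => ?_)
  obtain ⟨d, rfl⟩ := (Submodule.mem_span_range_iff_exists_fun R).1 hy
  refine H a ha (-d) ?_
  simpa [neg_smul, Finset.sum_neg_distrib, eq_neg_iff_add_eq_zero] using hxy

section Minor

variable {A σ ι : Type*} [CommRing A] [Fintype ι]

theorem mulVec_of_apply_comp (θ : ι → σ → A) (e : ι → σ) (u : ι → A) :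
    (Matrix.of fun i j => θ j (e i)) *ᵥ u = fun i => (∑ j, u j • θ j) (e i) := by
  ext i
  simp only [mulVec, dotProduct, of_apply, Finset.sum_apply, Pi.smul_apply, smul_eq_mul,
    mul_comm]

variable [IsDomain A] [DecidableEq ι]

theorem linearIndependent_of_det_ne_zero {θ : ι → σ → A} {e : ι → σ}
    (hdet : (Matrix.of fun i j => θ j (e i)).det ≠ 0) :
    LinearIndependent A θ :=
  Fintype.linearIndependent_iffₛ.2 fun f g hfg => congrFun <| mulVec_injective_of_det_ne_zero
    hdet <| by simp only [mulVec_of_apply_comp, hfg]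

theorem det_smul_eq_sum_adjugate_mulVec (θ : ι → σ → A) (e : ι → σ) {x : σ → A} {a : A}
    (ha : a ≠ 0) {d : ι → A} (hx : a • x = ∑ j, d j • θ j) :
    (Matrix.of fun i j => θ j (e i)).det • x =
      ∑ j, ((Matrix.of fun i j => θ j (e i)).adjugate *ᵥ fun i => x (e i)) j • θ j := by
  set M : Matrix ι ι A := Matrix.of fun i j => θ j (e i)
  have hMd : M *ᵥ d = a • fun i => x (e i) := by
    rw [mulVec_of_apply_comp, ← hx]; rfl
  have hd : M.det • d = a • (M.adjugate *ᵥ fun i => x (e i)) := by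
    rw [← mulVec_smul, ← hMd, mulVec_mulVec, adjugate_mul, smul_mulVec, one_mulVec]
  apply smul_right_injective (σ → A) ha
  simp only [smul_comm a M.det x, hx, Finset.smul_sum, smul_smul]
  exact Finset.sum_congr rfl fun j _ => congrArg (· • θ j) (congrFun hd j)

end Minor

theorem stmt7_general {A : Type} [CommRing A] [IsDomain A]
    (r k : ℕ) (N : Submodule A (Fin r → A))
    (hrank : ∀ θ' : Fin (k + 1) → N, ∃ c : Fin (k + 1) → A, c ≠ 0 ∧
      ∑ j, c j • (θ' j : Fin r → A) = 0)
    (θ : Fin k → N)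
    (e : Fin k → Fin r)
    (p : A) (hp : p = (Matrix.of fun i j => (θ j : Fin r → A) (e i)).det)
    (hp0 : p ≠ 0) :
    ∀ θ0 : N, ∃! c : Fin k → A,
      p • (θ0 : Fin r → A) = ∑ j, c j • (θ j : Fin r → A) := by
  intro θ0
  have hli : LinearIndependent A fun j => (θ j : Fin r → A) :=
    linearIndependent_of_det_ne_zero (hp ▸ hp0)
  have hdep : ¬LinearIndependent A (Fin.cons (θ0 : Fin r → A) fun j => (θ j : Fin r → A)) := by
    obtain ⟨c, hc0, hc⟩ := hrank (Fin.cons θ0 θ)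
    refine Fintype.not_linearIndependent_iff.2 ⟨c, ?_, Function.ne_iff.1 hc0⟩
    simpa only [Fin.sum_univ_succ, Fin.cons_zero, Fin.cons_succ] using hc
  obtain ⟨a, ha, d, hd⟩ := exists_smul_eq_sum_of_not_linearIndependent_cons hli hdep
  have hex := hp ▸ det_smul_eq_sum_adjugate_mulVec _ e ha hd
  exact ⟨_, hex, fun c hc =>
    funext <| Fintype.linearIndependent_iffₛ.1 hli _ _ <| hc.symm.trans hex⟩

/-- Identify `Hom(L, A)` with `Fin r → A` via the basis `v₁, …, v_r`.  If
`θ₁, …, θ_k ∈ N` have an `r × k` coefficient matrix with a nonzero `k × k` minor `p`,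
and the rank of `N` is at most `k` (every `k+1` elements of `N` are `A`-linearly
dependent), then every `θ ∈ N` has a unique representation `p • θ = Σ pⱼ • θⱼ`;
in particular the localization `N[p⁻¹]` is free over `A[p⁻¹]` with basis the `θⱼ`. -/
theorem stmt7 {A : Type} [CommRing A] [IsDomain A]
    (r k : ℕ) (N : Submodule A (Fin r → A))
    (hrank : ∀ θ' : Fin (k + 1) → N, ∃ c : Fin (k + 1) → A, c ≠ 0 ∧
      ∑ j, c j • (θ' j : Fin r → A) = 0)
    (θ : Fin k → N)
    (e : Fin k → Fin r) (he : Function.Injective e)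
    (p : A) (hp : p = (Matrix.of fun i j => (θ j : Fin r → A) (e i)).det)
    (hp0 : p ≠ 0) :
    ∀ θ0 : N, ∃! c : Fin k → A,
      p • (θ0 : Fin r → A) = ∑ j, c j • (θ j : Fin r → A) :=
  stmt7_general r k N hrank θ e p hp hp0
end

section
/- Let V be a vector space over ℝ or ℂ, let S be a finite subset of V with S ∩ (−S) = ∅, and let w be a linear automorphism of V such that w(S ∪ (−S)) = S ∪ (−S). For a subset γ ⊆ S define w_*γ := w(γ ∪ (−(S∖γ))) ∩ S, let |γ| := Σ_{β∈γ} β, and let ρ := (1/2) Σ_{β∈S} β. Then |w_*γ| = w(|γ| − ρ) + ρ. -/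
/-- Let `S` be a finite set of vectors with `S ∩ (−S) = ∅` and `w` a linear automorphism
preserving `S ∪ (−S)`.  For `γ ⊆ S` let `w_*γ := w(γ ∪ −(S∖γ)) ∩ S`.  Then with
`|γ| = Σ_{β∈γ} β` and `ρ = ½ Σ_{β∈S} β` one has `|w_*γ| = w(|γ| − ρ) + ρ`. -/
theorem stmt11 {V : Type} [AddCommGroup V] [Module ℝ V] [DecidableEq V]
    (S : Finset V) (hS : ∀ x ∈ S, -x ∉ S)
    (w : V ≃ₗ[ℝ] V)
    (hw : (⇑w) '' ((S : Set V) ∪ (-(S : Set V))) = (S : Set V) ∪ (-(S : Set V)))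
    (γ : Finset V) (hγ : γ ⊆ S)
    (wγ : Finset V)
    (hwγ : (wγ : Set V) =
      ((⇑w) '' ((γ : Set V) ∪ (-((S \ γ : Finset V) : Set V)))) ∩ (S : Set V)) :
    (∑ β ∈ wγ, β) =
      w ((∑ β ∈ γ, β) - (2⁻¹ : ℝ) • ∑ β ∈ S, β) + (2⁻¹ : ℝ) • ∑ β ∈ S, β := by
  classical
  have hwγS : wγ ⊆ S := fun x hx => by
    have hx' : x ∈ (wγ : Set V) := hx
    rw [hwγ] at hx'
    exact_mod_cast hx'.2
  -- the signed set T = γ ∪ −(S∖γ)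
  set T : Finset V := γ ∪ (S \ γ).image (fun x => -x) with hTdef
  have hmemT : ∀ x, x ∈ T ↔ x ∈ γ ∨ -x ∈ S \ γ := by
    intro x
    simp only [hTdef, Finset.mem_union, Finset.mem_image]
    constructor
    · rintro (h | ⟨y, hy, rfl⟩)
      · exact Or.inl h
      · right; simpa using hy
    · rintro (h | h)
      · exact Or.inl h
      · exact Or.inr ⟨-x, h, by simp⟩
  have hTset : (T : Set V) = (γ : Set V) ∪ (-((S \ γ : Finset V) : Set V)) := by
    ext x
    simp only [Finset.mem_coe, hmemT, Set.mem_union, Set.mem_neg, Finset.mem_coe]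
  -- each element of T lies in S ∪ −S
  have hTsub : ∀ x ∈ T, x ∈ (S : Set V) ∪ (-(S : Set V)) := by
    intro x hx
    rcases (hmemT x).1 hx with h | h
    · exact Or.inl (hγ h)
    · exact Or.inr (by simpa using (Finset.mem_sdiff.1 h).1)
  -- T contains at most one of each pair {x, −x}
  have hTpair : ∀ x ∈ T, -x ∉ T := by
    intro x hx hnx
    rcases (hmemT x).1 hx with h | h
    · rcases (hmemT _).1 hnx with h' | h'
      · exact hS x (hγ h) (hγ h')
      · simp only [neg_neg] at h'
        exact (Finset.mem_sdiff.1 h').2 h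
    · rcases (hmemT _).1 hnx with h' | h'
      · exact (Finset.mem_sdiff.1 h).2 h'
      · simp only [neg_neg] at h'
        exact hS x (Finset.mem_sdiff.1 h').1 ((Finset.mem_sdiff.1 h).1)
  -- T contains at least one of each pair coming from S
  have hTfull : ∀ x ∈ S, x ∈ T ∨ -x ∈ T := by
    intro x hx
    by_cases h : x ∈ γ
    · exact Or.inl ((hmemT x).2 (Or.inl h))
    · exact Or.inr ((hmemT (-x)).2 (Or.inr (by simp [Finset.mem_sdiff, hx, h])))
  -- U = w(T)
  set U : Finset V := T.image (fun x => w x) with hUdef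
  have hwinj : Function.Injective (fun x : V => w x) := w.injective
  have hUset : (U : Set V) = (⇑w) '' (T : Set V) := by
    simp [hUdef, Finset.coe_image]
  have hwγU : (wγ : Set V) = (U : Set V) ∩ (S : Set V) := by
    rw [hwγ, hUset, hTset]
  -- U ⊆ S ∪ −S
  have hUsub : ∀ x ∈ U, x ∈ (S : Set V) ∪ (-(S : Set V)) := by
    intro x hx
    rcases Finset.mem_image.1 hx with ⟨t, ht, rfl⟩
    rw [← hw]
    exact ⟨t, hTsub t ht, rfl⟩
  -- membership in wγ as a Finset
  have hmemwγ : ∀ x, x ∈ wγ ↔ x ∈ U ∧ x ∈ S := by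
    intro x
    constructor
    · intro h
      have : x ∈ (wγ : Set V) := h
      rw [hwγU] at this
      exact ⟨this.1, this.2⟩
    · rintro ⟨h1, h2⟩
      have hm : x ∈ (U : Set V) ∩ (S : Set V) := ⟨h1, h2⟩
      rw [← hwγU] at hm
      exact hm
  -- U contains at most one of each pair
  have hUpair : ∀ x ∈ U, -x ∉ U := by
    intro x hx hnx
    rcases Finset.mem_image.1 hx with ⟨t, ht, rfl⟩
    rcases Finset.mem_image.1 hnx with ⟨t', ht', het'⟩
    have hwt : w t' = w (-t) := by rw [map_neg]; exact het'
    have : t' = -t := hwinj hwt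
    rw [this] at ht'
    exact hTpair t ht ht'
  -- key: U = wγ ∪ −(S∖wγ)
  have hUeq : U = wγ ∪ (S \ wγ).image (fun x => -x) := by
    ext x
    simp only [Finset.mem_union, Finset.mem_image]
    constructor
    · intro hx
      rcases hUsub x hx with h | h
      · exact Or.inl ((hmemwγ x).2 ⟨hx, h⟩)
      · right
        refine ⟨-x, ?_, by simp⟩
        have hnxS : -x ∈ S := by simpa using h
        refine Finset.mem_sdiff.2 ⟨hnxS, fun hc => ?_⟩
        exact hUpair x hx (((hmemwγ (-x)).1 hc).1)
    · rintro (h | ⟨y, hy, rfl⟩)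
      · exact ((hmemwγ x).1 h).1
      · -- y ∈ S \ wγ, show -y ∈ U
        have hyS : y ∈ S := (Finset.mem_sdiff.1 hy).1
        have hynwγ : y ∉ wγ := (Finset.mem_sdiff.1 hy).2
        -- y = w t for some t ∈ S ∪ −S
        have : y ∈ (⇑w) '' ((S : Set V) ∪ (-(S : Set V))) := by
          rw [hw]; exact Or.inl hyS
        rcases this with ⟨t, htm, rfl⟩
        have hone : t ∈ T ∨ -t ∈ T := by
          rcases htm with h' | h'
          · exact hTfull t h'
          · have := hTfull (-t) (by simpa using h')
            simpa [or_comm] using this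
        rcases hone with h' | h'
        · exfalso
          apply hynwγ
          exact (hmemwγ _).2 ⟨Finset.mem_image.2 ⟨t, h', rfl⟩, hyS⟩
        · rw [← map_neg]
          exact Finset.mem_image.2 ⟨-t, h', rfl⟩
  -- disjointness for sums
  have hdisj : ∀ (A : Finset V), A ⊆ S → Disjoint A ((S \ A).image (fun x => -x)) := by
    intro A hA
    rw [Finset.disjoint_left]
    intro x hx hx'
    rcases Finset.mem_image.1 hx' with ⟨y, hy, rfl⟩
    exact hS y (Finset.mem_sdiff.1 hy).1 (by simpa using hA hx)
  have hneginj : Function.Injective (fun x : V => -x) := neg_injective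
  have hsumA : ∀ (A : Finset V), A ⊆ S →
      ∑ x ∈ (A ∪ (S \ A).image (fun x => -x)), x
        = (∑ x ∈ A, x) - ∑ x ∈ S \ A, x := by
    intro A hA
    rw [Finset.sum_union (hdisj A hA),
      Finset.sum_image (fun a _ b _ h => hneginj h)]
    rw [sub_eq_add_neg, Finset.sum_neg_distrib]
  have hsumT : ∑ x ∈ T, x = (∑ x ∈ γ, x) - ∑ x ∈ S \ γ, x := hsumA γ hγ
  have hsumU : ∑ x ∈ U, x = w (∑ x ∈ T, x) := by
    rw [hUdef, Finset.sum_image (fun a _ b _ h => hwinj h), map_sum]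
  have hsumU' : ∑ x ∈ U, x = (∑ x ∈ wγ, x) - ∑ x ∈ S \ wγ, x := by
    rw [hUeq]; exact hsumA wγ hwγS
  have hsdiff : ∀ (A : Finset V), A ⊆ S →
      ∑ x ∈ S \ A, x = (∑ x ∈ S, x) - ∑ x ∈ A, x := by
    intro A hA
    rw [eq_sub_iff_add_eq, Finset.sum_sdiff hA]
  -- final algebra
  have key : (∑ x ∈ wγ, x) - (∑ x ∈ S \ wγ, x)
      = w ((∑ x ∈ γ, x) - ∑ x ∈ S \ γ, x) := by
    rw [← hsumU', hsumU, hsumT]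
  rw [hsdiff γ hγ, hsdiff wγ hwγS] at key
  set a := ∑ x ∈ wγ, x
  set b := ∑ x ∈ γ, x
  set s := ∑ x ∈ S, x
  have h2 : (2 : ℝ) • a = (2 : ℝ) • (w (b - (2⁻¹ : ℝ) • s) + (2⁻¹ : ℝ) • s) := by
    have hws : w (b - (s - b)) = (2:ℝ) • w (b - (2⁻¹ : ℝ) • s) := by
      rw [← map_smul]
      congr 1
      module
    have h2s : (2 : ℝ) • ((2⁻¹ : ℝ) • s) = s := by
      rw [smul_smul]; norm_num
    rw [smul_add, h2s, ← hws, ← key]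
    rw [two_smul]
    abel
  have := smul_right_injective V (two_ne_zero (α := ℝ)) h2
  exact this
end
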